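/- arXiv:1002.1279 — 4 statements merged into one kernel-verified Lean document; each statement's English description precedes it below -/
import Mathlib

section
/- Let a : (0,∞) → ℝ be continuous, positive, integrable on (1,∞), and suppose γ := sup_{r∈(0,1)} r·∫_r^∞ a(s) ds < ∞. Then there exists a concave continuous function B : [0,∞) → [0,∞) such that B(r) ≥ r·∫_r^∞ a(s) ds for all r ≥ 0 and B(r)/r → 0 as r → ∞. -/
open MeasureTheory Filter Set Topology

/-!
Let `g t := ∫_{max t 1}^∞ a`. It is continuous, antitone, nonnegative and tends to `0`,
so `B r := γ + ∫_0^r g` is continuous and concave. For `r < 1` the constant `γ` already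
dominates `r ∫_r^∞ a`, while for `r ≥ 1` monotonicity gives `∫_0^r g ≥ r g r = r ∫_r^∞ a`.
Finally `B r / r → 0` because the averages of a function tending to `0` tend to `0`.
-/

section Tail

variable {f : ℝ → ℝ} {c : ℝ}

theorem continuous_integral_Ioi_max (hf : IntegrableOn f (Ioi c)) :
    Continuous fun t => ∫ x in Ioi (max t c), f x :=
  hf.continuousOn_Ici_primitive_Ioi.comp_continuous (continuous_id.max continuous_const)
    fun t => le_max_right t c

theorem antitone_integral_Ioi_max (hf : IntegrableOn f (Ioi c))
    (hf₀ : ∀ x ∈ Ioi c, 0 ≤ f x) :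
    Antitone fun t => ∫ x in Ioi (max t c), f x := by
  intro s t hst
  have hcs : c ≤ max s c := le_max_right s c
  refine setIntegral_mono_set (hf.mono_set (Ioi_subset_Ioi hcs)) ?_
    (Ioi_subset_Ioi (max_le_max_right c hst)).eventuallyLE
  filter_upwards [ae_restrict_mem measurableSet_Ioi] with x hx
  exact hf₀ x (lt_of_le_of_lt hcs hx)

theorem tendsto_integral_Ioi_max_atTop :
    Tendsto (fun t => ∫ x in Ioi (max t c), f x) atTop (𝓝 0) :=
  tendsto_integral_Ioi_zero (tendsto_atTop_mono (fun t => le_max_left t c) tendsto_id)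

end Tail

section AntitoneIntegral

variable {g : ℝ → ℝ}

theorem AntitoneOn.sub_mul_le_intervalIntegral {a b : ℝ} (hg : AntitoneOn g (Icc a b))
    (hab : a ≤ b) : (b - a) * g b ≤ ∫ x in a..b, g x := by
  have := intervalIntegral.integral_mono_on hab (intervalIntegrable_const (μ := volume))
    (AntitoneOn.intervalIntegrable (by rwa [uIcc_of_le hab]))
    fun x hx => hg hx ⟨hab, le_rfl⟩ hx.2
  simpa only [intervalIntegral.integral_const, smul_eq_mul] using this

theorem AntitoneOn.intervalIntegral_le_sub_mul {a b : ℝ} (hg : AntitoneOn g (Icc a b))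
    (hab : a ≤ b) : ∫ x in a..b, g x ≤ (b - a) * g a := by
  have := intervalIntegral.integral_mono_on hab
    (AntitoneOn.intervalIntegrable (by rwa [uIcc_of_le hab]))
    (intervalIntegrable_const (μ := volume))
    fun x hx => hg ⟨le_rfl, hab⟩ hx hx.1
  simpa only [intervalIntegral.integral_const, smul_eq_mul] using this

theorem Antitone.concaveOn_primitive (hg : Antitone g) (hgc : Continuous g) (a : ℝ) :
    ConcaveOn ℝ univ fun r => ∫ x in a..r, g x :=
  Antitone.concaveOn_univ_of_deriv
    (fun r => (hgc.integral_hasStrictDerivAt a r).hasDerivAt.differentiableAt)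
    (by rwa [funext (Continuous.deriv_integral g hgc a)])

/-- Splitting `[0, r]` at `√r` bounds the average of `g` over `[0, r]` by `g 0 / √r + g √r`. -/
theorem Antitone.tendsto_intervalIntegral_div_atTop (hg : Antitone g)
    (hlim : Tendsto g atTop (𝓝 0)) :
    Tendsto (fun r => (∫ x in (0 : ℝ)..r, g x) / r) atTop (𝓝 0) := by
  have hg₀ : ∀ x, 0 ≤ g x := hg.le_of_tendsto hlim
  have hbound : Tendsto (fun r => g 0 / √r + g √r) atTop (𝓝 0) := by
    simpa using (tendsto_const_nhds.div_atTop Real.tendsto_sqrt_atTop).add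
      (hlim.comp Real.tendsto_sqrt_atTop)
  refine squeeze_zero' ?_ ?_ hbound
  · filter_upwards [eventually_ge_atTop 0] with r hr
    exact div_nonneg (intervalIntegral.integral_nonneg hr fun x _ => hg₀ x) hr
  filter_upwards [eventually_gt_atTop 1] with r hr
  have hr₀ : 0 < r := one_pos.trans hr
  have hs₀ : 0 ≤ √r := Real.sqrt_nonneg r
  have hsr : √r ≤ r := Real.sqrt_le_self_iff.mpr (Or.inr hr.le)
  have hsplit := intervalIntegral.integral_add_adjacent_intervals
    ((hg.antitoneOn _).intervalIntegrable (μ := volume) (a := 0) (b := √r))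
    ((hg.antitoneOn _).intervalIntegrable (b := r))
  have hhead := (hg.antitoneOn (Icc 0 √r)).intervalIntegral_le_sub_mul hs₀
  have htail := (hg.antitoneOn (Icc √r r)).intervalIntegral_le_sub_mul hsr
  have hscale : (g 0 / √r + g √r) * r = √r * g 0 + r * g √r := by
    have : √r ≠ 0 := (Real.sqrt_pos.mpr hr₀).ne'
    field_simp
    linear_combination (-g 0) * Real.mul_self_sqrt hr₀.le
  rw [div_le_iff₀ hr₀, hscale, ← hsplit]
  nlinarith [hg₀ √r]

end AntitoneIntegral

theorem stmt0_general (a : ℝ → ℝ)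
    (ha_pos : ∀ r ∈ Set.Ioi (0:ℝ), 0 < a r)
    (ha_int : IntegrableOn a (Set.Ioi 1))
    (γ : ℝ) (hγ : IsLUB ((fun r => r * ∫ s in Set.Ioi r, a s) '' Set.Ioo 0 1) γ) :
    ∃ B : ℝ → ℝ, ContinuousOn B (Set.Ici 0) ∧ ConcaveOn ℝ (Set.Ici 0) B ∧
      (∀ r ∈ Set.Ici (0:ℝ), 0 ≤ B r) ∧
      (∀ r ∈ Set.Ici (0:ℝ), r * ∫ s in Set.Ioi r, a s ≤ B r) ∧
      Filter.Tendsto (fun r => B r / r) Filter.atTop (nhds 0) := by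
  have ha₀ : ∀ x, 0 < x → 0 ≤ a x := fun x hx => (ha_pos x hx).le
  have hγ₀ : 0 ≤ γ := by
    refine le_trans (mul_nonneg (by norm_num) ?_) (hγ.1 ⟨1 / 2, by norm_num, rfl⟩)
    exact setIntegral_nonneg measurableSet_Ioi fun x hx => ha₀ x (one_half_pos.trans hx)
  set g : ℝ → ℝ := fun t => ∫ s in Ioi (max t 1), a s with hg_def
  have hg_anti : Antitone g :=
    antitone_integral_Ioi_max ha_int fun x hx => ha₀ x (zero_lt_one.trans hx)
  have hg_cont : Continuous g := continuous_integral_Ioi_max ha_int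
  have hg_lim : Tendsto g atTop (𝓝 0) := tendsto_integral_Ioi_max_atTop
  have hprim₀ : ∀ r, 0 ≤ r → 0 ≤ ∫ t in (0 : ℝ)..r, g t := fun r hr =>
    intervalIntegral.integral_nonneg hr fun t _ => hg_anti.le_of_tendsto hg_lim t
  refine ⟨fun r => γ + ∫ t in (0 : ℝ)..r, g t, ?_, ?_, fun r hr => add_nonneg hγ₀ (hprim₀ r hr),
    ?_, ?_⟩
  · exact (continuous_const.add
      (intervalIntegral.continuous_primitive hg_cont.intervalIntegrable 0)).continuousOn
  · exact (concaveOn_const γ (convex_Ici 0)).add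
      ((hg_anti.concaveOn_primitive hg_cont 0).subset (subset_univ _) (convex_Ici 0))
  · intro r (hr : 0 ≤ r)
    rcases lt_or_ge r 1 with h1 | h1
    · rcases hr.eq_or_lt with rfl | h0
      · simpa using hγ₀
      · exact (hγ.1 ⟨r, ⟨h0, h1⟩, rfl⟩).trans (le_add_of_nonneg_right (hprim₀ r hr))
    · have hgr : g r = ∫ s in Ioi r, a s := by simp only [hg_def, max_eq_left h1]
      calc r * ∫ s in Ioi r, a s = (r - 0) * g r := by rw [sub_zero, hgr]
        _ ≤ ∫ t in (0 : ℝ)..r, g t := (hg_anti.antitoneOn _).sub_mul_le_intervalIntegral hr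
        _ ≤ γ + ∫ t in (0 : ℝ)..r, g t := le_add_of_nonneg_left hγ₀
  · simpa only [add_div, add_zero, id] using (tendsto_const_nhds.div_atTop tendsto_id).add
      (hg_anti.tendsto_intervalIntegral_div_atTop hg_lim)

/-- If `a` is positive and continuous on `(0,∞)`, integrable on `(1,∞)`, and
`γ := sup_{r ∈ (0,1)} r * ∫_r^∞ a(s) ds < ∞`, then there is a concave continuous
`B : [0,∞) → [0,∞)` with `B r ≥ r * ∫_r^∞ a(s) ds` for all `r ≥ 0` and `B r / r → 0`. -/
theorem stmt0 (a : ℝ → ℝ) (ha_cont : ContinuousOn a (Set.Ioi 0))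
    (ha_pos : ∀ r ∈ Set.Ioi (0:ℝ), 0 < a r)
    (ha_int : IntegrableOn a (Set.Ioi 1))
    (γ : ℝ) (hγ : IsLUB ((fun r => r * ∫ s in Set.Ioi r, a s) '' Set.Ioo 0 1) γ) :
    ∃ B : ℝ → ℝ, ContinuousOn B (Set.Ici 0) ∧ ConcaveOn ℝ (Set.Ici 0) B ∧
      (∀ r ∈ Set.Ici (0:ℝ), 0 ≤ B r) ∧
      (∀ r ∈ Set.Ici (0:ℝ), r * ∫ s in Set.Ioi r, a s ≤ B r) ∧
      Filter.Tendsto (fun r => B r / r) Filter.atTop (nhds 0) :=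
  stmt0_general a ha_pos ha_int γ hγ
end

section
/- With B and b_i defined as in the piecewise construction (B(r) = b_i r + Σ_{j=0}^{i-1}(b_j−b_{j+1})2^{j+1} + γ on (2^i,2^{i+1}]), for every k ≥ 1 and every i ≥ k+1 and r ∈ (2^i, 2^{i+1}], one has B(r)/r ≤ b_k + (γ + 2^k b_0)/r. Consequently limsup_{r→∞} B(r)/r ≤ b_k for all k, and since b_k → 0, B(r)/r → 0 as r → ∞. -/
open MeasureTheory Set Filter

/- Proof idea: the `b j` decrease to `0`, so the slope increments `(b j - b (j+1)) 2^(j+1)`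
telescope. Splitting the sum in `B` at `k`, the part below `k` is at most `2^k b₀` and the part
from `k` to `i` is at most `(b k - b i) 2^i ≤ (b k - b i) r`, which gives
`B r ≤ b k r + 2^k b₀ + γ`. Together with `B r ≥ γ` and `b k → 0` this forces `B r / r → 0`,
and then `limsup = 0 ≤ b k`. -/

lemma antitoneOn_setIntegral_Ioi {a : ℝ → ℝ} {t₀ : ℝ} (hint : IntegrableOn a (Ioi t₀))
    (hnn : ∀ s > t₀, 0 ≤ a s) : AntitoneOn (fun t => ∫ s in Ioi t, a s) (Ici t₀) := by
  intro t ht u _ htu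
  refine setIntegral_mono_set (hint.mono_set (Ioi_subset_Ioi ht)) ?_
    (Ioi_subset_Ioi htu).eventuallyLE
  filter_upwards [ae_restrict_mem measurableSet_Ioi] with s hs
  exact hnn s (lt_of_le_of_lt ht hs)

lemma sum_Ico_sub_mul_le {b w : ℕ → ℝ} (hb : Antitone b) (hw : Monotone w) {k m : ℕ}
    (hkm : k ≤ m) :
    ∑ j ∈ Finset.Ico k m, (b j - b (j + 1)) * w (j + 1) ≤ (b k - b m) * w m := by
  calc ∑ j ∈ Finset.Ico k m, (b j - b (j + 1)) * w (j + 1)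
      ≤ ∑ j ∈ Finset.Ico k m, (b j - b (j + 1)) * w m := by
        refine Finset.sum_le_sum fun j hj => mul_le_mul_of_nonneg_left ?_ ?_
        · exact hw (Finset.mem_Ico.mp hj).2
        · exact sub_nonneg.mpr (hb j.le_succ)
    _ = (b k - b m) * w m := by
        rw [← Finset.sum_mul, ← neg_sub (b m), ← Finset.sum_Ico_sub (f := b) hkm,
          ← Finset.sum_neg_distrib]
        simp only [neg_sub]

section DyadicSlopes

variable {b : ℕ → ℝ} {k i : ℕ} {r : ℝ}

lemma mul_add_sum_sub_mul_two_pow_le (hb : Antitone b) (hbk : 0 ≤ b k) (hki : k ≤ i)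
    (hr : 2 ^ i ≤ r) :
    b i * r + ∑ j ∈ Finset.range i, (b j - b (j + 1)) * 2 ^ (j + 1) ≤
      b k * r + 2 ^ k * b 0 := by
  have hmono : Monotone fun n : ℕ => (2 : ℝ) ^ n := pow_right_mono₀ one_le_two
  have below := sum_Ico_sub_mul_le hb hmono k.zero_le
  have above := sum_Ico_sub_mul_le hb hmono hki
  rw [Finset.range_eq_Ico, ← Finset.sum_Ico_consecutive _ k.zero_le hki]
  have : (b k - b i) * 2 ^ i ≤ (b k - b i) * r :=
    mul_le_mul_of_nonneg_left hr (sub_nonneg.mpr (hb hki))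
  nlinarith [pow_pos (two_pos : (0 : ℝ) < 2) k]

lemma mul_add_sum_sub_mul_two_pow_nonneg (hb : Antitone b) (hb_nonneg : ∀ j, 0 ≤ b j)
    (hr : 0 ≤ r) : 0 ≤ b i * r + ∑ j ∈ Finset.range i, (b j - b (j + 1)) * 2 ^ (j + 1) :=
  add_nonneg (mul_nonneg (hb_nonneg i) hr) <| Finset.sum_nonneg fun j _ =>
    mul_nonneg (sub_nonneg.mpr (hb j.le_succ)) (by positivity)

end DyadicSlopes

lemma eventually_exists_mem_Ioc_pow {x : ℝ} (hx : 1 < x) (n : ℕ) :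
    ∀ᶠ r in atTop, ∃ i ≥ n, r ∈ Ioc (x ^ i) (x ^ (i + 1)) := by
  filter_upwards [eventually_gt_atTop (x ^ n)] with r hr
  obtain ⟨m, hm_lt, hm_le⟩ :=
    exists_mem_Ioc_zpow ((pow_pos (zero_lt_one.trans hx) n).trans hr) hx
  have hnm : (n : ℤ) ≤ m := by
    by_contra! h
    have : x ^ (m + 1) ≤ x ^ (n : ℤ) := zpow_le_zpow_right₀ hx.le (by omega)
    rw [zpow_natCast] at this
    linarith
  lift m to ℕ using (by omega)
  refine ⟨m, by exact_mod_cast hnm, ?_, ?_⟩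
  · simpa only [zpow_natCast] using hm_lt
  · simpa only [← Nat.cast_succ, zpow_natCast] using hm_le

lemma tendsto_zero_of_le_of_forall_le_add {α : Type*} {l : Filter α} {f g : α → ℝ}
    {b : ℕ → ℝ} {e : ℕ → α → ℝ} (hb : Tendsto b atTop (nhds 0))
    (he : ∀ k, Tendsto (e k) l (nhds 0)) (hg : Tendsto g l (nhds 0)) (hgf : g ≤ᶠ[l] f)
    (hfb : ∀ᶠ k in atTop, ∀ᶠ x in l, f x ≤ b k + e k x) : Tendsto f l (nhds 0) := by
  refine tendsto_order.mpr ⟨fun c hc => ?_, fun c hc => ?_⟩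
  · filter_upwards [hg.eventually (lt_mem_nhds hc), hgf] with x h₁ h₂
    linarith
  · obtain ⟨k, hbk, hk⟩ := ((hb.eventually (gt_mem_nhds (half_pos hc))).and hfb).exists
    filter_upwards [hk, (he k).eventually (gt_mem_nhds (half_pos hc))] with x h₁ h₂
    linarith

theorem stmt2_general (a : ℝ → ℝ)
    (ha_pos : ∀ r ∈ Set.Ioi (0:ℝ), 0 < a r)
    (ha_int : ∀ r > (0:ℝ), IntegrableOn a (Set.Ioi r))
    (γ : ℝ)
    (b : ℕ → ℝ) (hb : ∀ i, b i = ∫ s in Set.Ioi ((2:ℝ)^i), a s)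
    (B : ℝ → ℝ)
    (hBi : ∀ i ≥ 1, ∀ r ∈ Set.Ioc ((2:ℝ)^i) ((2:ℝ)^(i+1)),
      B r = b i * r + (∑ j ∈ Finset.range i, (b j - b (j+1)) * 2^(j+1)) + γ) :
    (∀ k ≥ 1, ∀ i ≥ k + 1, ∀ r ∈ Set.Ioc ((2:ℝ)^i) ((2:ℝ)^(i+1)),
        B r / r ≤ b k + (γ + 2^k * b 0) / r) ∧
    (∀ k ≥ 1, Filter.limsup (fun r => B r / r) Filter.atTop ≤ b k) ∧
    Filter.Tendsto (fun r => B r / r) Filter.atTop (nhds 0) := by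
  have hb_nonneg (i : ℕ) : 0 ≤ b i := by
    rw [hb i]
    exact setIntegral_nonneg measurableSet_Ioi fun s hs =>
      (ha_pos s (mem_Ioi.mpr ((pow_pos two_pos i).trans hs))).le
  have hb_anti : Antitone b := fun i j hij => by
    simp only [hb]
    exact antitoneOn_setIntegral_Ioi (ha_int 1 one_pos)
      (fun s hs => (ha_pos s (mem_Ioi.mpr (one_pos.trans hs))).le)
      (mem_Ici.mpr (one_le_pow₀ one_le_two)) (mem_Ici.mpr (one_le_pow₀ one_le_two))
      (pow_le_pow_right₀ one_le_two hij)
  have hb_lim : Tendsto b atTop (nhds 0) := by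
    simpa only [← hb] using tendsto_integral_Ioi_zero (f := a) (μ := volume)
      (tendsto_pow_atTop_atTop_of_one_lt one_lt_two)
  have upper : ∀ k i, k ≤ i → 1 ≤ i → ∀ r ∈ Ioc ((2:ℝ)^i) ((2:ℝ)^(i+1)),
      B r / r ≤ b k + (γ + 2^k * b 0) / r := by
    intro k i hki hi r hr
    have hr0 : 0 < r := (pow_pos two_pos i).trans hr.1
    rw [div_le_iff₀ hr0, add_mul, div_mul_cancel₀ _ hr0.ne', hBi i hi r hr]
    linarith [mul_add_sum_sub_mul_two_pow_le hb_anti (hb_nonneg k) hki hr.1.le]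
  have lower : ∀ i ≥ 1, ∀ r ∈ Ioc ((2:ℝ)^i) ((2:ℝ)^(i+1)), γ / r ≤ B r / r := by
    intro i hi r hr
    have hr0 : 0 < r := (pow_pos two_pos i).trans hr.1
    rw [hBi i hi r hr]
    gcongr
    linarith [mul_add_sum_sub_mul_two_pow_nonneg (i := i) hb_anti hb_nonneg hr0.le]
  have hlim : Tendsto (fun r => B r / r) atTop (nhds 0) := by
    refine tendsto_zero_of_le_of_forall_le_add (g := fun r => γ / r)
      (e := fun k r => (γ + 2 ^ k * b 0) / r) hb_lim
      (fun k => tendsto_const_nhds.div_atTop tendsto_id)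
      (tendsto_const_nhds.div_atTop tendsto_id) ?_ ?_
    · filter_upwards [eventually_exists_mem_Ioc_pow one_lt_two 1] with r ⟨i, hi, hr⟩
      exact lower i hi r hr
    · filter_upwards [eventually_ge_atTop 1] with k hk
      filter_upwards [eventually_exists_mem_Ioc_pow one_lt_two k] with r ⟨i, hki, hr⟩
      exact upper k i hki (hk.trans hki) r hr
  refine ⟨fun k hk i hi r hr => upper k i (by omega) (by omega) r hr,
    fun k _ => hlim.limsup_eq.trans_le (hb_nonneg k), hlim⟩

/-- For the piecewise-linear `B`: for every `k ≥ 1`, `i ≥ k+1` and `r ∈ (2^i, 2^{i+1}]`,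
`B r / r ≤ b k + (γ + 2^k b₀)/r`; hence `limsup_{r→∞} B r / r ≤ b k` for all `k ≥ 1`,
and since `b k → 0`, `B r / r → 0` as `r → ∞`. -/
theorem stmt2 (a : ℝ → ℝ) (ha_cont : ContinuousOn a (Set.Ioi 0))
    (ha_pos : ∀ r ∈ Set.Ioi (0:ℝ), 0 < a r)
    (ha_int : ∀ r > (0:ℝ), IntegrableOn a (Set.Ioi r))
    (γ : ℝ) (hγ : 0 ≤ γ)
    (b : ℕ → ℝ) (hb : ∀ i, b i = ∫ s in Set.Ioi ((2:ℝ)^i), a s)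
    (B : ℝ → ℝ)
    (hB0 : ∀ r ∈ Set.Icc (0:ℝ) 2, B r = b 0 * r + γ)
    (hBi : ∀ i ≥ 1, ∀ r ∈ Set.Ioc ((2:ℝ)^i) ((2:ℝ)^(i+1)),
      B r = b i * r + (∑ j ∈ Finset.range i, (b j - b (j+1)) * 2^(j+1)) + γ) :
    (∀ k ≥ 1, ∀ i ≥ k + 1, ∀ r ∈ Set.Ioc ((2:ℝ)^i) ((2:ℝ)^(i+1)),
        B r / r ≤ b k + (γ + 2^k * b 0) / r) ∧
    (∀ k ≥ 1, Filter.limsup (fun r => B r / r) Filter.atTop ≤ b k) ∧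
    Filter.Tendsto (fun r => B r / r) Filter.atTop (nhds 0) :=
  stmt2_general a ha_pos ha_int γ b hb B hBi
end

section
/- Let M > 0 and let Ψ̃ : (0,∞) → [0,∞) be nondecreasing with Ψ̃(s) ≤ (M s/2)·Ψ̃(G) for s ≥ 2/M and Ψ̃(s) ≤ Ψ̃(2/M) for s ≤ 2/M. Let g ∈ H¹(0,M) be nonnegative with ∫_0^M g = 1 and G := sup g. Then for every y ∈ (0,M): M·Ψ̃(g(y)) ≤ M·Ψ̃(2/M) + (M/2)·Ψ̃(G) + M^{3/2}·‖∂_y Ψ(g)‖_{L²(0,M)}, and consequently Ψ̃(G) ≤ 2Ψ̃(2/M) + 2M^{1/2}‖∂_y Ψ(g)‖_{L²(0,M)}, where Ψ(g) = Ψ̃(g) + Ψ(0) differs from Ψ̃(g) by a constant. -/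
/-!
By the fundamental theorem of calculus and Cauchy–Schwarz, `Ψ̃(g y) ≤ Ψ̃(g z) + √M ‖p‖₂` on
`[0, M]`; averaging over `z` gives `M Ψ̃(g y) ≤ ∫ Ψ̃ ∘ g + M^{3/2} ‖p‖₂`.
The growth hypotheses say `Ψ̃(s) ≤ Ψ̃(2/M) + (M/2) Ψ̃(G) s` for every `s > 0`, so the unit mass
of `g` bounds `∫ Ψ̃ ∘ g` by `M Ψ̃(2/M) + (M/2) Ψ̃(G)`. At a point where `g` attains `G`, the term
`(M/2) Ψ̃(G)` is absorbed into the left-hand side `M Ψ̃(G)`.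
-/

open MeasureTheory Set

theorem integral_abs_le_sqrt_measureReal_mul_sqrt_integral_sq {α : Type*} [MeasurableSpace α]
    {μ : Measure α} [IsFiniteMeasure μ] {f : α → ℝ} (hf : MemLp f 2 μ) :
    ∫ x, |f x| ∂μ ≤ √(μ.real univ) * √(∫ x, f x ^ 2 ∂μ) := by
  have h := integral_mul_norm_le_Lp_mul_Lq (μ := μ) (f := fun _ => (1:ℝ)) (g := f)
    Real.HolderConjugate.two_two (by simpa using memLp_const 1) (by simpa using hf)
  simpa [Real.sqrt_eq_rpow] using h

theorem memLp_two_of_hasDerivAt {F p : ℝ → ℝ} {a b : ℝ}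
    (hF : ∀ t ∈ Icc a b, HasDerivAt F (p t) t)
    (hp : IntegrableOn (fun t => p t ^ 2) (Icc a b)) :
    MemLp p 2 (volume.restrict (Icc a b)) := by
  have hmeas : AEStronglyMeasurable p (volume.restrict (Icc a b)) :=
    (stronglyMeasurable_deriv F).aestronglyMeasurable.congr
      ((ae_restrict_iff' measurableSet_Icc).2 (.of_forall fun t ht => (hF t ht).deriv))
  exact (memLp_two_iff_integrable_sq hmeas).2 hp

theorem le_add_sqrt_mul_sqrt_integral_sq_of_hasDerivAt {F p : ℝ → ℝ} {a b y z : ℝ}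
    (hF : ∀ t ∈ Icc a b, HasDerivAt F (p t) t)
    (hp : IntegrableOn (fun t => p t ^ 2) (Ioo a b)) (hy : y ∈ Icc a b) (hz : z ∈ Icc a b) :
    F y ≤ F z + √(b - a) * √(∫ t in Ioo a b, p t ^ 2) := by
  have hp' : IntegrableOn (fun t => p t ^ 2) (Icc a b) :=
    (integrableOn_Icc_iff_integrableOn_Ioo (by simp) (by simp)).2 hp
  have hsub : uIoc z y ⊆ Icc a b := uIoc_subset_uIcc.trans (uIcc_subset_Icc hz hy)
  have hp_Lp := memLp_two_of_hasDerivAt hF hp'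
  have hftc : ∫ t in z..y, p t = F y - F z :=
    intervalIntegral.integral_eq_sub_of_hasDerivAt (fun t ht => hF t (uIcc_subset_Icc hz hy ht))
      (IntegrableOn.mono_set (hp_Lp.integrable one_le_two)
        (uIcc_subset_Icc hz hy)).intervalIntegrable
  have hlen : volume.real (uIoc z y) ≤ b - a := by
    rw [uIoc, Real.volume_real_Ioc_of_le inf_le_sup]
    linarith [sup_le hz.2 hy.2, le_inf hz.1 hy.1]
  have hsq : ∫ t in uIoc z y, p t ^ 2 ≤ ∫ t in Ioo a b, p t ^ 2 := by
    rw [← integral_Icc_eq_integral_Ioo]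
    exact setIntegral_mono_set hp' (.of_forall fun t => sq_nonneg _) hsub.eventuallyLE
  have hosc : F y - F z ≤ √(b - a) * √(∫ t in Ioo a b, p t ^ 2) :=
    calc F y - F z ≤ |∫ t in z..y, p t| := hftc ▸ le_abs_self _
      _ ≤ ∫ t in uIoc z y, |p t| := by
        simpa only [Real.norm_eq_abs] using
          intervalIntegral.norm_integral_le_integral_norm_uIoc (f := p) (μ := volume)
      _ ≤ √(volume.real (uIoc z y)) * √(∫ t in uIoc z y, p t ^ 2) := by
        have : IsFiniteMeasure (volume.restrict (uIoc z y)) := by rw [uIoc]; infer_instance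
        simpa using integral_abs_le_sqrt_measureReal_mul_sqrt_integral_sq
          (hp_Lp.mono_measure (Measure.restrict_mono hsub le_rfl))
      _ ≤ √(b - a) * √(∫ t in Ioo a b, p t ^ 2) := by gcongr
  linarith

theorem integral_comp_le_of_growth {α : Type*} [MeasurableSpace α] {μ : Measure α}
    [IsFiniteMeasure μ] {Ψ : ℝ → ℝ} {g : α → ℝ} {κ K : ℝ} (hΨκ : 0 ≤ Ψ κ) (hK : 0 ≤ K)
    (hsmall : ∀ s, 0 < s → s ≤ κ → Ψ s ≤ Ψ κ) (hlarge : ∀ s ≥ κ, Ψ s ≤ K * s)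
    (hg_pos : ∀ᵐ x ∂μ, 0 < g x) (hg : Integrable g μ) (hmass : ∫ x, g x ∂μ = 1)
    (hΨg : Integrable (fun x => Ψ (g x)) μ) :
    ∫ x, Ψ (g x) ∂μ ≤ μ.real univ * Ψ κ + K := by
  have hpoint : ∀ᵐ x ∂μ, Ψ (g x) ≤ Ψ κ + K * g x := by
    filter_upwards [hg_pos] with x hx
    rcases le_total (g x) κ with h | h
    · linarith [hsmall _ hx h, mul_nonneg hK hx.le]
    · linarith [hlarge _ h]
  calc ∫ x, Ψ (g x) ∂μ ≤ ∫ x, (Ψ κ + K * g x) ∂μ :=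
        integral_mono_ae hΨg ((integrable_const _).add (hg.const_mul K)) hpoint
    _ = μ.real univ * Ψ κ + K := by
      rw [integral_add (integrable_const _) (hg.const_mul K), integral_const, integral_const_mul,
        hmass, smul_eq_mul, mul_one]

theorem measureReal_mul_le_integral_add {α : Type*} [MeasurableSpace α] {μ : Measure α}
    [IsFiniteMeasure μ] {F : α → ℝ} {a c : ℝ} (hF : Integrable F μ)
    (h : ∀ᵐ x ∂μ, a ≤ F x + c) :
    μ.real univ * a ≤ ∫ x, F x ∂μ + μ.real univ * c := by
  have hmono : ∫ _, a ∂μ ≤ ∫ x, (F x + c) ∂μ :=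
    integral_mono_ae (integrable_const a) (hF.add (integrable_const c)) h
  rwa [integral_add hF (integrable_const c), integral_const, integral_const, smul_eq_mul,
    smul_eq_mul] at hmono

theorem stmt5_general (M : ℝ) (hM : 0 < M)
    (Ψt : ℝ → ℝ)
    (hΨt_nonneg : ∀ s > (0:ℝ), 0 ≤ Ψt s)
    (g : ℝ → ℝ) (hg_pos : ∀ y ∈ Set.Icc (0:ℝ) M, 0 < g y)
    (hg_mass : (∫ y in Set.Ioo (0:ℝ) M, g y) = 1)
    (hg_cont : ContinuousOn g (Set.Icc 0 M))
    (G : ℝ) (hG : IsLUB (g '' Set.Icc 0 M) G)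
    (hgrowth : ∀ s ≥ 2 / M, Ψt s ≤ (M * s / 2) * Ψt G)
    (hsmall : ∀ s : ℝ, 0 < s → s ≤ 2 / M → Ψt s ≤ Ψt (2 / M))
    (p : ℝ → ℝ)
    (hp : ∀ y ∈ Set.Icc (0:ℝ) M, HasDerivAt (fun z => Ψt (g z)) (p y) y)
    (hp2 : IntegrableOn (fun y => (p y) ^ 2) (Set.Ioo 0 M)) :
    (∀ y ∈ Set.Ioo (0:ℝ) M,
        M * Ψt (g y) ≤ M * Ψt (2 / M) + (M / 2) * Ψt G
          + M ^ ((3:ℝ)/2) * Real.sqrt (∫ y in Set.Ioo (0:ℝ) M, (p y) ^ 2)) ∧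
    Ψt G ≤ 2 * Ψt (2 / M)
      + 2 * M ^ ((1:ℝ)/2) * Real.sqrt (∫ y in Set.Ioo (0:ℝ) M, (p y) ^ 2) := by
  set C := √(∫ y in Ioo 0 M, p y ^ 2)
  have hosc : ∀ y ∈ Icc 0 M, ∀ z ∈ Icc 0 M, Ψt (g y) ≤ Ψt (g z) + √M * C := fun y hy z hz => by
    simpa using le_add_sqrt_mul_sqrt_integral_sq_of_hasDerivAt hp hp2 hy hz
  obtain ⟨y₀, hy₀, rfl⟩ : G ∈ g '' Icc 0 M :=
    hG.mem_of_isClosed ⟨g 0, 0, left_mem_Icc.2 hM.le, rfl⟩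
      (isCompact_Icc.image_of_continuousOn hg_cont).isClosed
  have hΨg : IntegrableOn (fun z => Ψt (g z)) (Ioo 0 M) :=
    (ContinuousOn.integrableOn_Icc fun z hz =>
      (hp z hz).continuousAt.continuousWithinAt).mono_set Ioo_subset_Icc_self
  have hmass_bound : ∫ z in Ioo 0 M, Ψt (g z) ≤ M * Ψt (2 / M) + M / 2 * Ψt (g y₀) := by
    have h := integral_comp_le_of_growth (μ := volume.restrict (Ioo 0 M))
      (κ := 2 / M) (K := M / 2 * Ψt (g y₀))
      (hΨt_nonneg _ (by positivity)) (mul_nonneg (by positivity) (hΨt_nonneg _ (hg_pos y₀ hy₀)))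
      hsmall (fun s hs => (hgrowth s hs).trans_eq (by ring))
      (ae_restrict_of_forall_mem measurableSet_Ioo fun z hz => hg_pos z (Ioo_subset_Icc_self hz))
      ((hg_cont.integrableOn_Icc).mono_set Ioo_subset_Icc_self) hg_mass hΨg
    simpa [Real.volume_real_Ioo_of_le hM.le] using h
  have hpoint : ∀ y ∈ Icc 0 M,
      M * Ψt (g y) ≤ M * Ψt (2 / M) + M / 2 * Ψt (g y₀) + M * √M * C := by
    intro y hy
    have h := measureReal_mul_le_integral_add hΨg
      (ae_restrict_of_forall_mem measurableSet_Ioo fun z hz =>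
        hosc y hy z (Ioo_subset_Icc_self hz))
    rw [measureReal_restrict_apply_univ, Real.volume_real_Ioo_of_le hM.le, sub_zero] at h
    linarith
  have hM32 : M ^ ((3 : ℝ) / 2) = M * √M := by
    rw [show (3 : ℝ) / 2 = 1 + 1 / 2 by norm_num, Real.rpow_add hM, Real.rpow_one,
      ← Real.sqrt_eq_rpow]
  refine ⟨fun y hy => hM32 ▸ hpoint y (Ioo_subset_Icc_self hy), ?_⟩
  rw [← Real.sqrt_eq_rpow]
  nlinarith [hpoint y₀ hy₀]

/-- The key sup-bound step of Lemma 3 (Lemma `impo` in the paper): for a nondecreasing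
nonnegative `Ψ̃` satisfying the stated growth bounds, and a nonnegative `g ∈ H¹(0,M)`
with unit `L¹` norm and supremum `G`, one has for every `y ∈ (0,M)`
`M Ψ̃(g(y)) ≤ M Ψ̃(2/M) + (M/2) Ψ̃(G) + M^{3/2} ‖∂_y Ψ(g)‖_{L²(0,M)}`, and consequently
`Ψ̃(G) ≤ 2 Ψ̃(2/M) + 2 M^{1/2} ‖∂_y Ψ(g)‖_{L²(0,M)}`.
Here `g ∈ H¹` is modelled by assuming `Ψ̃ ∘ g` has a pointwise derivative `p` on `[0,M]`
with `p² ` integrable (note `∂_y Ψ(g) = ∂_y Ψ̃(g)` since `Ψ` and `Ψ̃` differ by a constant). -/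
theorem stmt5 (M : ℝ) (hM : 0 < M)
    (Ψt : ℝ → ℝ)
    (hΨt_nonneg : ∀ s > (0:ℝ), 0 ≤ Ψt s)
    (hΨt_mono : ∀ s t : ℝ, 0 < s → s ≤ t → Ψt s ≤ Ψt t)
    (g : ℝ → ℝ) (hg_pos : ∀ y ∈ Set.Icc (0:ℝ) M, 0 < g y)
    (hg_mass : (∫ y in Set.Ioo (0:ℝ) M, g y) = 1)
    (hg_cont : ContinuousOn g (Set.Icc 0 M))
    (G : ℝ) (hG : IsLUB (g '' Set.Icc 0 M) G)
    (hgrowth : ∀ s ≥ 2 / M, Ψt s ≤ (M * s / 2) * Ψt G)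
    (hsmall : ∀ s : ℝ, 0 < s → s ≤ 2 / M → Ψt s ≤ Ψt (2 / M))
    (p : ℝ → ℝ)
    (hp : ∀ y ∈ Set.Icc (0:ℝ) M, HasDerivAt (fun z => Ψt (g z)) (p y) y)
    (hp2 : IntegrableOn (fun y => (p y) ^ 2) (Set.Ioo 0 M)) :
    (∀ y ∈ Set.Ioo (0:ℝ) M,
        M * Ψt (g y) ≤ M * Ψt (2 / M) + (M / 2) * Ψt G
          + M ^ ((3:ℝ)/2) * Real.sqrt (∫ y in Set.Ioo (0:ℝ) M, (p y) ^ 2)) ∧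
    Ψt G ≤ 2 * Ψt (2 / M)
      + 2 * M ^ ((1:ℝ)/2) * Real.sqrt (∫ y in Set.Ioo (0:ℝ) M, (p y) ^ 2) :=
  stmt5_general M hM Ψt hΨt_nonneg g hg_pos hg_mass hg_cont G hG hgrowth hsmall p hp hp2
end

section
/- Let a : (0,∞) → ℝ be positive, continuous, and integrable on (1,∞). Define Ψ(r) := ∫_{1/r}^1 a(s) ds, Ψ(0) := −∫_1^∞ a(s) ds, Ψ̃ := Ψ − Ψ(0), Ψ₁ with Ψ₁(1)=0 and Ψ₁'(r) = r^{-1} a(1/r), and the functional 𝓛₁(g) := (1/2)‖∂_y Ψ(g)‖²_{L²(0,M)} + ∫_0^M (Ψ(g) − M Ψ₁(g)) dy. Then for every M > 0 there is a constant μ_M > 0 depending only on M and a such that every nonnegative g ∈ H¹(0,M) with ∫_0^M g dy = 1 satisfies ‖Ψ̃(g)‖²_{L^∞(0,M)} ≤ 32 M · 𝓛₁(g) + μ_M. -/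
/-!
Write `Ψ̃ = Ψ - Ψ(0)`. Then `Ψ̃(r) = ∫_{1/r}^∞ a` is nonnegative and nondecreasing, and the
substitution `s ↦ 1/s` gives `Ψ₁(r) ≤ r Ψ̃(r)`. Since `∫ g = 1`, somewhere `g ≤ 1/M`, so by the
fundamental theorem of calculus and Cauchy–Schwarz `Ψ̃(g) ≤ Ψ̃(1/M) + √(M ‖∂_y Ψ(g)‖²)` on `[0, M]`.
Together with `∫ g = 1` this sup bound gives `∫ (Ψ(g) - M Ψ₁(g)) ≥ M Ψ(0) - M sup Ψ̃(g)`, and the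
claim follows by squaring the sup bound and absorbing its linear term by AM–GM.
-/

open MeasureTheory Set intervalIntegral

theorem IntegrableOn.of_integrableOn_sq {α : Type*} [MeasurableSpace α] {μ : Measure α}
    {s : Set α} {f : α → ℝ} (hs : μ s ≠ ⊤) (hf : AEStronglyMeasurable f (μ.restrict s))
    (hf2 : IntegrableOn (fun x => f x ^ 2) s μ) : IntegrableOn f s μ := by
  have : IsFiniteMeasure (μ.restrict s) := isFiniteMeasure_restrict.2 hs
  exact ((memLp_two_iff_integrable_sq hf).2 hf2).integrable one_le_two

theorem sq_setIntegral_abs_le {α : Type*} [MeasurableSpace α] {μ : Measure α}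
    {s : Set α} {f : α → ℝ} (hs : μ s ≠ ⊤) (hf : AEStronglyMeasurable f (μ.restrict s))
    (hf2 : IntegrableOn (fun x => f x ^ 2) s μ) :
    (∫ x in s, |f x| ∂μ) ^ 2 ≤ μ.real s * ∫ x in s, f x ^ 2 ∂μ := by
  rcases eq_or_ne (μ s) 0 with h0 | h0
  · simp [Measure.restrict_eq_zero.2 h0]
  have hjensen := (convexOn_pow 2).map_set_average_le (continuous_pow 2).continuousOn
    isClosed_Ici h0 hs (ae_of_all _ fun x => abs_nonneg (f x))
    (IntegrableOn.of_integrableOn_sq hs hf hf2).abs (by simpa [Function.comp_def] using hf2)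
  simp only [sq_abs, setAverage_eq, smul_eq_mul] at hjensen
  have hm : 0 < μ.real s := ENNReal.toReal_pos h0 hs
  rw [mul_pow, inv_pow, ← div_eq_inv_mul, ← div_eq_inv_mul,
    div_le_div_iff₀ (by positivity) hm] at hjensen
  nlinarith

theorem abs_sub_le_setIntegral_abs_of_hasDerivAt {u p : ℝ → ℝ} {a b x y : ℝ}
    (hderiv : ∀ t ∈ Icc a b, HasDerivAt u (p t) t) (hp : IntegrableOn p (Ioo a b))
    (hx : x ∈ Icc a b) (hy : y ∈ Icc a b) : |u y - u x| ≤ ∫ t in Ioo a b, |p t| := by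
  have hsub : uIcc x y ⊆ Icc a b := uIcc_subset_Icc hx hy
  have hpIcc : IntegrableOn p (Icc a b) := (integrableOn_Icc_iff_integrableOn_Ioo).2 hp
  rw [← integral_eq_sub_of_hasDerivAt (fun t ht => hderiv t (hsub ht))
    (hpIcc.mono_set hsub).intervalIntegrable, ← integral_Icc_eq_integral_Ioo]
  calc |∫ t in x..y, p t| ≤ ∫ t in uIoc x y, |p t| := by
        simpa using norm_integral_le_integral_norm_uIoc (f := p) (a := x) (b := y) (μ := volume)
    _ ≤ ∫ t in Icc a b, |p t| :=
        setIntegral_mono_set hpIcc.abs (ae_of_all _ fun _ => abs_nonneg _)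
          (uIoc_subset_uIcc.trans hsub).eventuallyLE

theorem exists_mem_Ioo_le_setIntegral_div {g : ℝ → ℝ} {a b : ℝ} (hab : a < b)
    (hg : IntegrableOn g (Ioo a b)) : ∃ y ∈ Ioo a b, g y ≤ (∫ t in Ioo a b, g t) / (b - a) := by
  obtain ⟨y, hy, hle⟩ := exists_le_setAverage (by simp [hab]) (by simp) hg
  rw [setAverage_eq, Real.volume_real_Ioo_of_le hab.le, smul_eq_mul, inv_mul_eq_div] at hle
  exact ⟨y, hy, hle⟩

-- No integrability of `f` is needed: otherwise its integral is the junk value `0`.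
theorem setIntegral_le_setIntegral_of_integral_nonpos {α : Type*} [MeasurableSpace α]
    {μ : Measure α} {s : Set α} {f h : α → ℝ} (hs : MeasurableSet s)
    (hh : IntegrableOn h s μ) (hh0 : ∫ x in s, h x ∂μ ≤ 0) (hle : ∀ x ∈ s, h x ≤ f x) :
    ∫ x in s, h x ∂μ ≤ ∫ x in s, f x ∂μ := by
  by_cases hf : IntegrableOn f s μ
  · exact setIntegral_mono_on hh hf hs hle
  · rwa [integral_undef hf]

section TailIntegral

variable {a : ℝ → ℝ}

theorem integrableOn_Ioi_of_continuousOn_Ioi_zero (ha_cont : ContinuousOn a (Ioi 0))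
    (ha_int : IntegrableOn a (Ioi 1)) {x : ℝ} (hx : 0 < x) : IntegrableOn a (Ioi x) := by
  have hIcc : IntegrableOn a (Icc x 1) :=
    (ha_cont.mono fun t (ht : t ∈ Icc x 1) => hx.trans_le ht.1).integrableOn_Icc
  refine (hIcc.union ha_int).mono_set fun t ht => ?_
  rcases le_or_gt t 1 with h | h
  exacts [Or.inl ⟨le_of_lt ht, h⟩, Or.inr h]

theorem setIntegral_Ioi_nonneg (ha_nonneg : ∀ x ∈ Ioi 0, 0 ≤ a x) {x : ℝ} (hx : 0 ≤ x) :
    0 ≤ ∫ s in Ioi x, a s :=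
  setIntegral_nonneg measurableSet_Ioi fun t ht => ha_nonneg t (mem_Ioi.2 (hx.trans_lt ht))

theorem antitoneOn_setIntegral_Ioi_s6 (ha_cont : ContinuousOn a (Ioi 0))
    (ha_nonneg : ∀ x ∈ Ioi 0, 0 ≤ a x) (ha_int : IntegrableOn a (Ioi 1)) :
    AntitoneOn (fun x => ∫ s in Ioi x, a s) (Ioi 0) := fun _ hx _ _ hxy =>
  setIntegral_mono_set (integrableOn_Ioi_of_continuousOn_Ioi_zero ha_cont ha_int hx)
    ((ae_restrict_mem measurableSet_Ioi).mono fun t ht => ha_nonneg t (mem_Ioi.2 (hx.trans ht)))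
    (Ioi_subset_Ioi hxy).eventuallyLE

theorem integral_inv_sq_mul_comp_inv (ha_cont : ContinuousOn a (Ioi 0)) {b c : ℝ}
    (hb : 0 < b) (hc : 0 < c) :
    ∫ s in b..c, (s ^ 2)⁻¹ * a s⁻¹ = ∫ t in c⁻¹..b⁻¹, a t := by
  have hpos : ∀ s ∈ uIcc b c, 0 < s := fun s hs =>
    lt_of_lt_of_le (lt_min hb hc) hs.1
  have hsubst := integral_comp_mul_deriv' (f := fun s : ℝ => s⁻¹) (f' := fun s => -(s ^ 2)⁻¹)
    (g := a) (fun s hs => hasDerivAt_inv (hpos s hs).ne')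
    ((continuousOn_pow 2).inv₀ fun s hs => pow_ne_zero 2 (hpos s hs).ne').neg
    (ha_cont.mono (by rintro _ ⟨s, hs, rfl⟩; exact inv_pos.2 (hpos s hs)))
  rw [integral_symm b⁻¹ c⁻¹, ← hsubst, ← intervalIntegral.integral_neg]
  simp only [Function.comp_apply, mul_neg, neg_neg, mul_comm]

theorem integral_inv_mul_comp_inv_le (ha_cont : ContinuousOn a (Ioi 0))
    (ha_nonneg : ∀ x ∈ Ioi 0, 0 ≤ a x) (ha_int : IntegrableOn a (Ioi 1)) {r : ℝ} (hr : 0 < r) :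
    ∫ s in (1:ℝ)..r, s⁻¹ * a s⁻¹ ≤ r * ∫ s in Ioi r⁻¹, a s := by
  have hr_int := integrableOn_Ioi_of_continuousOn_Ioi_zero ha_cont ha_int (inv_pos.2 hr)
  rcases le_or_gt r 1 with h | h
  · calc ∫ s in (1:ℝ)..r, s⁻¹ * a s⁻¹ ≤ 0 := by
          rw [integral_symm, neg_nonpos]
          exact integral_nonneg h fun s hs =>
            have hs0 : 0 < s := hr.trans_le hs.1
            mul_nonneg (inv_nonneg.2 hs0.le) (ha_nonneg _ (inv_pos.2 hs0))
      _ ≤ r * ∫ s in Ioi r⁻¹, a s :=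
          mul_nonneg hr.le (setIntegral_Ioi_nonneg ha_nonneg (inv_pos.2 hr).le)
  have hinv : ContinuousOn (fun s : ℝ => s⁻¹) (Icc 1 r) :=
    continuousOn_inv₀.mono fun s hs => (one_pos.trans_le hs.1).ne'
  have hcont : ContinuousOn (fun s => a s⁻¹) (Icc 1 r) :=
    ha_cont.comp hinv fun s hs => inv_pos.2 (one_pos.trans_le hs.1)
  calc ∫ s in (1:ℝ)..r, s⁻¹ * a s⁻¹ ≤ ∫ s in (1:ℝ)..r, r * ((s ^ 2)⁻¹ * a s⁻¹) := by
        refine integral_mono_on h.le ?_ ?_ fun s hs => ?_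
        · exact (hinv.mul hcont).intervalIntegrable_of_Icc h.le
        · have hinv_sq : ContinuousOn (fun s : ℝ => (s ^ 2)⁻¹) (Icc 1 r) :=
            (continuousOn_pow 2).inv₀ fun s hs => pow_ne_zero 2 (one_pos.trans_le hs.1).ne'
          exact (continuousOn_const.mul (hinv_sq.mul hcont)).intervalIntegrable_of_Icc h.le
        · have hs0 : 0 < s := one_pos.trans_le hs.1
          have : s⁻¹ ≤ r * (s ^ 2)⁻¹ := by
            rw [← div_eq_mul_inv, le_div_iff₀ (by positivity)]
            field_simp
            exact hs.2
          calc s⁻¹ * a s⁻¹ ≤ r * (s ^ 2)⁻¹ * a s⁻¹ :=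
                mul_le_mul_of_nonneg_right this (ha_nonneg _ (inv_pos.2 hs0))
            _ = r * ((s ^ 2)⁻¹ * a s⁻¹) := mul_assoc _ _ _
    _ = r * ∫ t in r⁻¹..1, a t := by
        rw [intervalIntegral.integral_const_mul, integral_inv_sq_mul_comp_inv ha_cont one_pos hr,
          inv_one]
    _ ≤ r * ∫ s in Ioi r⁻¹, a s := by
        rw [← integral_Ioi_sub_Ioi hr_int (inv_le_one_of_one_le₀ h.le)]
        have := setIntegral_Ioi_nonneg ha_nonneg zero_le_one
        exact mul_le_mul_of_nonneg_left (by linarith) hr.le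

end TailIntegral

section Energy

variable {Ψ Ψ₁ : ℝ → ℝ} {Ψ0 M : ℝ} {g p : ℝ → ℝ}

theorem le_add_setIntegral_abs_of_hasDerivAt (hM : 0 < M) (hΨ_mono : MonotoneOn Ψ (Ioi 0))
    (hg_pos : ∀ y ∈ Icc 0 M, 0 < g y) (hg_cont : ContinuousOn g (Icc 0 M))
    (hg_int : ∫ y in Ioo 0 M, g y = 1)
    (hderiv : ∀ y ∈ Icc 0 M, HasDerivAt (fun z => Ψ (g z)) (p y) y)
    (hp : IntegrableOn p (Ioo 0 M)) {y : ℝ} (hy : y ∈ Icc 0 M) :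
    Ψ (g y) ≤ Ψ M⁻¹ + ∫ t in Ioo 0 M, |p t| := by
  obtain ⟨y₀, hy₀, hgy₀⟩ := exists_mem_Ioo_le_setIntegral_div hM
    (hg_cont.integrableOn_Icc.mono_set Ioo_subset_Icc_self)
  rw [hg_int, sub_zero, one_div] at hgy₀
  have hy₀' := Ioo_subset_Icc_self hy₀
  have hsmall : Ψ (g y₀) ≤ Ψ M⁻¹ :=
    hΨ_mono (hg_pos y₀ hy₀') (inv_pos.2 hM) hgy₀
  have hvar := abs_sub_le_setIntegral_abs_of_hasDerivAt hderiv hp hy₀' hy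
  linarith [le_abs_self (Ψ (g y) - Ψ (g y₀))]

theorem le_setIntegral_sub_mul (hM : 0 < M) (hΨ0 : Ψ0 ≤ 0) (hΨ_ge : ∀ r > 0, Ψ0 ≤ Ψ r)
    (hΨ₁ : ∀ r > 0, Ψ₁ r ≤ r * (Ψ r - Ψ0)) (hg_pos : ∀ y ∈ Ioo 0 M, 0 < g y)
    (hg : IntegrableOn g (Ioo 0 M)) (hg_int : ∫ y in Ioo 0 M, g y = 1) {B : ℝ} (hB : 0 ≤ B)
    (hbound : ∀ y ∈ Ioo 0 M, Ψ (g y) - Ψ0 ≤ B) :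
    M * Ψ0 - M * B ≤ ∫ y in Ioo 0 M, (Ψ (g y) - M * Ψ₁ (g y)) := by
  have hlower_int : IntegrableOn (fun y => Ψ0 - M * B * g y) (Ioo 0 M) :=
    (integrableOn_const (by simp)).sub (hg.const_mul _)
  have hlower : ∫ y in Ioo 0 M, (Ψ0 - M * B * g y) = M * Ψ0 - M * B := by
    rw [MeasureTheory.integral_sub (integrableOn_const (C := Ψ0) (by simp)) (hg.const_mul _),
      MeasureTheory.integral_const_mul, hg_int,
      setIntegral_const, Real.volume_real_Ioo_of_le hM.le, smul_eq_mul]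
    ring
  rw [← hlower]
  refine setIntegral_le_setIntegral_of_integral_nonpos measurableSet_Ioo hlower_int
    (by rw [hlower]; nlinarith) fun y hy => ?_
  have hgy := hg_pos y hy
  have : Ψ₁ (g y) ≤ g y * B :=
    (hΨ₁ _ hgy).trans (mul_le_mul_of_nonneg_left (hbound y hy) hgy.le)
  nlinarith [hΨ_ge _ hgy]

theorem exists_sq_sub_le_energy (hΨ0 : Ψ0 ≤ 0) (hΨ_ge : ∀ r > 0, Ψ0 ≤ Ψ r)
    (hΨ_mono : MonotoneOn Ψ (Ioi 0)) (hΨ₁ : ∀ r > 0, Ψ₁ r ≤ r * (Ψ r - Ψ0)) :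
    ∀ M > (0:ℝ), ∃ μ > (0:ℝ),
      ∀ g p : ℝ → ℝ,
        (∀ y ∈ Icc 0 M, 0 < g y) →
        ContinuousOn g (Icc 0 M) →
        ∫ y in Ioo 0 M, g y = 1 →
        (∀ y ∈ Icc 0 M, HasDerivAt (fun z => Ψ (g z)) (p y) y) →
        IntegrableOn (fun y => p y ^ 2) (Ioo 0 M) →
        ∀ y ∈ Icc 0 M,
          (Ψ (g y) - Ψ0) ^ 2 ≤
            32 * M * ((1 / 2) * (∫ y in Ioo 0 M, p y ^ 2)
              + ∫ y in Ioo 0 M, (Ψ (g y) - M * Ψ₁ (g y))) + μ := by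
  intro M hM
  set K := Ψ M⁻¹ - Ψ0
  have hK : 0 ≤ K := sub_nonneg.2 (hΨ_ge _ (inv_pos.2 hM))
  refine ⟨K ^ 2 + (K + 16 * M ^ 2) ^ 2 + 32 * M ^ 2 * (K - Ψ0) + 1, by nlinarith, ?_⟩
  intro g p hg_pos hg_cont hg_int hderiv hp2 y hy
  have hp_meas : AEStronglyMeasurable p (volume.restrict (Ioo 0 M)) :=
    (measurable_deriv _).aestronglyMeasurable.congr <|
      (ae_restrict_mem measurableSet_Ioo).mono fun t ht =>
        (hderiv t (Ioo_subset_Icc_self ht)).deriv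
  have hp := IntegrableOn.of_integrableOn_sq (by simp) hp_meas hp2
  have hCS := sq_setIntegral_abs_le (by simp) hp_meas hp2
  rw [Real.volume_real_Ioo_of_le hM.le, sub_zero] at hCS
  set I := ∫ t in Ioo 0 M, |p t|
  have hI : 0 ≤ I := setIntegral_nonneg measurableSet_Ioo fun _ _ => abs_nonneg _
  have hsup : ∀ y ∈ Icc 0 M, Ψ (g y) - Ψ0 ≤ K + I := fun y hy => by
    linarith [le_add_setIntegral_abs_of_hasDerivAt hM hΨ_mono hg_pos hg_cont hg_int hderiv hp hy]
  have hlin := le_setIntegral_sub_mul hM hΨ0 hΨ_ge hΨ₁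
    (fun y hy => hg_pos y (Ioo_subset_Icc_self hy))
    (hg_cont.integrableOn_Icc.mono_set Ioo_subset_Icc_self) hg_int (add_nonneg hK hI)
    (fun y hy => hsup y (Ioo_subset_Icc_self hy))
  have hsq : (Ψ (g y) - Ψ0) ^ 2 ≤ (K + I) ^ 2 :=
    pow_le_pow_left₀ (sub_nonneg.2 (hΨ_ge _ (hg_pos y hy))) (hsup y hy) 2
  nlinarith [sq_nonneg (K + 16 * M ^ 2 - I)]

end Energy

/-- Lemma `impo`: with `Ψ(r) = ∫_{1/r}^1 a(s) ds`, `Ψ(0) = −∫_1^∞ a(s) ds`,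
`Ψ̃ = Ψ − Ψ(0)`, `Ψ₁(r) = ∫_1^r s⁻¹ a(1/s) ds`, and
`𝓛₁(g) = (1/2)‖∂_y Ψ(g)‖²_{L²(0,M)} + ∫_0^M (Ψ(g) − M Ψ₁(g))`,
for every `M > 0` there is `μ_M > 0` depending only on `M` and `a` such that every
nonnegative `g ∈ H¹(0,M)` with `∫_0^M g = 1` satisfies
`‖Ψ̃(g)‖²_{L^∞(0,M)} ≤ 32 M 𝓛₁(g) + μ_M` (stated pointwise on `[0,M]`).
Here `g ∈ H¹` is modelled by a pointwise derivative `p` of `Ψ ∘ g` with `p²` integrable. -/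
theorem stmt6 (a : ℝ → ℝ) (ha_cont : ContinuousOn a (Set.Ioi 0))
    (ha_pos : ∀ r ∈ Set.Ioi (0:ℝ), 0 < a r)
    (ha_int : IntegrableOn a (Set.Ioi 1))
    (Ψ Ψ₁ : ℝ → ℝ) (Ψ0 : ℝ)
    (hΨ : ∀ r > (0:ℝ), Ψ r = ∫ s in (r⁻¹)..1, a s)
    (hΨ0 : Ψ0 = -∫ s in Set.Ioi (1:ℝ), a s)
    (hΨ₁ : ∀ r > (0:ℝ), Ψ₁ r = ∫ s in (1:ℝ)..r, s⁻¹ * a s⁻¹) :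
    ∀ M > (0:ℝ), ∃ μ > (0:ℝ),
      ∀ g p : ℝ → ℝ,
        (∀ y ∈ Set.Icc (0:ℝ) M, 0 < g y) →
        ContinuousOn g (Set.Icc 0 M) →
        (∫ y in Set.Ioo (0:ℝ) M, g y) = 1 →
        (∀ y ∈ Set.Icc (0:ℝ) M, HasDerivAt (fun z => Ψ (g z)) (p y) y) →
        IntegrableOn (fun y => (p y) ^ 2) (Set.Ioo 0 M) →
        ∀ y ∈ Set.Icc (0:ℝ) M,
          (Ψ (g y) - Ψ0) ^ 2 ≤
            32 * M * ((1/2) * (∫ y in Set.Ioo (0:ℝ) M, (p y) ^ 2)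
              + ∫ y in Set.Ioo (0:ℝ) M, (Ψ (g y) - M * Ψ₁ (g y))) + μ := by
  have ha_nonneg : ∀ x ∈ Ioi (0:ℝ), 0 ≤ a x := fun x hx => (ha_pos x hx).le
  have htail : ∀ r > (0:ℝ), Ψ r - Ψ0 = ∫ s in Ioi r⁻¹, a s := fun r hr => by
    rw [hΨ r hr, hΨ0, sub_neg_eq_add, integral_interval_add_Ioi
      (integrableOn_Ioi_of_continuousOn_Ioi_zero ha_cont ha_int (inv_pos.2 hr)) ha_int]
  have hΨ0_nonpos : Ψ0 ≤ 0 := hΨ0 ▸ neg_nonpos.2 (setIntegral_Ioi_nonneg ha_nonneg zero_le_one)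
  have hΨ_ge : ∀ r > (0:ℝ), Ψ0 ≤ Ψ r := fun r hr =>
    sub_nonneg.1 (htail r hr ▸ setIntegral_Ioi_nonneg ha_nonneg (inv_pos.2 hr).le)
  have hΨ_mono : MonotoneOn Ψ (Ioi 0) := fun x hx y hy hxy => by
    have := antitoneOn_setIntegral_Ioi_s6 ha_cont ha_nonneg ha_int
      (mem_Ioi.2 (inv_pos.2 hy)) (mem_Ioi.2 (inv_pos.2 hx)) (inv_anti₀ hx hxy)
    linarith [htail x hx, htail y hy]
  have hΨ₁_le : ∀ r > (0:ℝ), Ψ₁ r ≤ r * (Ψ r - Ψ0) := fun r hr => by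
    rw [hΨ₁ r hr, htail r hr]
    exact integral_inv_mul_comp_inv_le ha_cont ha_nonneg ha_int hr
  exact exists_sq_sub_le_energy hΨ0_nonpos hΨ_ge hΨ_mono hΨ₁_le
end
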